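/- Fix v ∈ ℂ^N with |v_1| ≥ ⋯ ≥ |v_N| and m ≤ N. Let q* = min{ q ≤ m : |v_{q+1}| < (1/(m-q)) ∑_{i=q+1}^N |v_i| } and g(q) = (1/(m-q))(∑_{i=q+1}^N |v_i|)². Then f(q*) ≤ min_{q ≤ m} g(q), where f(q) = g(q) - ∑_{i=q+1}^N |v_i|². In other words, the optimal m-sparse unbiased sparsification of v satisfies E‖Φ(v) - v‖² ≤ min_{i ≤ m} (1/(m-i))(∑_{j=i+1}^N |v_j|)². -/

import Mathlib

open BigOperators

/-- Tail sum of absolute values: entries with (0-based) index `≥ q`. -/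
noncomputable def tailAbs {N : ℕ} (v : Fin N → ℂ) (q : ℕ) : ℝ :=
  ∑ i ∈ Finset.univ.filter (fun i : Fin N => q ≤ (i : ℕ)), ‖v i‖

/-- Tail sum of squared absolute values. -/
noncomputable def tailSq {N : ℕ} (v : Fin N → ℂ) (q : ℕ) : ℝ :=
  ∑ i ∈ Finset.univ.filter (fun i : Fin N => q ≤ (i : ℕ)), ‖v i‖ ^ 2

noncomputable def fObj {N : ℕ} (v : Fin N → ℂ) (m q : ℕ) : ℝ :=
  1 / ((m : ℝ) - q) * (tailAbs v q) ^ 2 - tailSq v q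

noncomputable def gObj {N : ℕ} (v : Fin N → ℂ) (m q : ℕ) : ℝ :=
  1 / ((m : ℝ) - q) * (tailAbs v q) ^ 2

/-- The magnitude of the entry at (0-based) position `q`, or `0` if out of range. -/
noncomputable def entryAbs {N : ℕ} (v : Fin N → ℂ) (q : ℕ) : ℝ :=
  if h : q < N then ‖v ⟨q, h⟩‖ else 0

/-!
Write `k = m - q`, `a = |v_{q+1}|` and `T` for the tail after it. Passing from `q` to `q + 1`
changes `f` by `T²/(k-1) - ((a+T)²/k - a²) = (T - (k-1)a)² / (k(k-1)) ≥ 0`, so `f` is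
nondecreasing below `m`; and `g(q+1) ≤ g(q)` as soon as `T ≤ (k-1)a`, i.e. whenever the
pivot condition fails at `q`. By minimality of `q*` this holds for all `q < q*`, so
`f(q*) ≤ g(q*) ≤ g(q)` for `q ≤ q*`, while `f(q*) ≤ f(q) ≤ g(q)` for `q* ≤ q < m`.
-/

theorem Fin.sum_filter_le_eq_dite_add {M : Type*} [AddCommMonoid M] {N : ℕ} (F : Fin N → M)
    (q : ℕ) :
    ∑ i ∈ Finset.univ.filter (fun i : Fin N => q ≤ (i : ℕ)), F i
      = (if h : q < N then F ⟨q, h⟩ else 0)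
        + ∑ i ∈ Finset.univ.filter (fun i : Fin N => q + 1 ≤ (i : ℕ)), F i := by
  split_ifs with h
  · rw [← Finset.sum_insert (s := Finset.univ.filter _) (by simp)]
    congr 1
    ext i
    simp only [Finset.mem_filter, Finset.mem_univ, true_and, Finset.mem_insert, Fin.ext_iff]
    omega
  · rw [zero_add]
    refine Finset.sum_congr (Finset.filter_congr fun i _ => ?_) fun _ _ => rfl
    omega

theorem sq_add_div_sub_sq_le_sq_div_sub_one {k : ℝ} (hk : 1 < k) (a t : ℝ) :
    (a + t) ^ 2 / k - a ^ 2 ≤ t ^ 2 / (k - 1) := by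
  have hk0 : 0 < k := by linarith
  have hk1 : 0 < k - 1 := by linarith
  rw [div_sub' hk0.ne', div_le_div_iff₀ hk0 hk1]
  nlinarith [sq_nonneg (t - (k - 1) * a)]

theorem sq_div_sub_one_le_sq_add_div {k a t : ℝ} (hk : 1 ≤ k) (ha : 0 ≤ a) (ht : 0 ≤ t)
    (hpivot : a + t ≤ k * a) : t ^ 2 / (k - 1) ≤ (a + t) ^ 2 / k := by
  rcases hk.eq_or_lt with rfl | hk
  -- `k = 1` is the step to `q + 1 = m`, where `g` takes the junk value `T² / 0 = 0`.
  · simp only [sub_self, div_zero, div_one]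
    positivity
  have hk0 : 0 < k := by linarith
  have hk1 : 0 < k - 1 := by linarith
  have hkt : k * t ≤ (k - 1) * (a + t) := by linarith
  rw [div_le_div_iff₀ hk1 hk0]
  calc t ^ 2 * k = k * t * t := by ring
    _ ≤ (k - 1) * (a + t) * (a + t) := mul_le_mul hkt (by linarith) ht (by nlinarith)
    _ = (a + t) ^ 2 * (k - 1) := by ring

section Tails

variable {N : ℕ} (v : Fin N → ℂ)

theorem entryAbs_nonneg (q : ℕ) : 0 ≤ entryAbs v q := by
  unfold entryAbs
  split_ifs <;> positivity

theorem tailAbs_nonneg (q : ℕ) : 0 ≤ tailAbs v q :=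
  Finset.sum_nonneg fun _ _ => norm_nonneg _

theorem tailSq_nonneg (q : ℕ) : 0 ≤ tailSq v q :=
  Finset.sum_nonneg fun _ _ => sq_nonneg _

theorem tailAbs_eq_entryAbs_add (q : ℕ) : tailAbs v q = entryAbs v q + tailAbs v (q + 1) :=
  Fin.sum_filter_le_eq_dite_add _ q

theorem tailSq_eq_entryAbs_sq_add (q : ℕ) :
    tailSq v q = entryAbs v q ^ 2 + tailSq v (q + 1) := by
  rw [tailSq, Fin.sum_filter_le_eq_dite_add, entryAbs, apply_dite (· ^ 2), zero_pow two_ne_zero]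
  rfl

variable {m : ℕ}

theorem fObj_le_gObj (q : ℕ) : fObj v m q ≤ gObj v m q :=
  sub_le_self _ (tailSq_nonneg v q)

theorem fObj_le_fObj_succ {q : ℕ} (hq : q + 1 < m) : fObj v m q ≤ fObj v m (q + 1) := by
  have hk : (1 : ℝ) < m - q := by
    have : (q : ℝ) + 1 < m := by exact_mod_cast hq
    linarith
  have := sq_add_div_sub_sq_le_sq_div_sub_one hk (entryAbs v q) (tailAbs v (q + 1))
  simp only [fObj, one_div_mul_eq_div, tailAbs_eq_entryAbs_add v q,
    tailSq_eq_entryAbs_sq_add v q, Nat.cast_succ, ← sub_sub]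
  linarith

theorem monotoneOn_fObj : MonotoneOn (fObj v m) (Set.Iio m) :=
  monotoneOn_of_le_succ Set.ordConnected_Iio fun _ _ _ hsucc => fObj_le_fObj_succ v hsucc

theorem gObj_succ_le {q : ℕ} (hq : q < m) (hpivot : tailAbs v q ≤ (m - q) * entryAbs v q) :
    gObj v m (q + 1) ≤ gObj v m q := by
  have hk : (1 : ℝ) ≤ m - q := by
    have : (q : ℝ) + 1 ≤ m := by exact_mod_cast hq
    linarith
  rw [tailAbs_eq_entryAbs_add] at hpivot
  have := sq_div_sub_one_le_sq_add_div hk (entryAbs_nonneg v q) (tailAbs_nonneg v (q + 1))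
    hpivot
  simpa only [gObj, one_div_mul_eq_div, tailAbs_eq_entryAbs_add v q, Nat.cast_succ,
    ← sub_sub] using this

theorem antitoneOn_gObj {p : ℕ} (hpm : p ≤ m)
    (hpivot : ∀ q < p, tailAbs v q ≤ (m - q) * entryAbs v q) :
    AntitoneOn (gObj v m) (Set.Iic p) :=
  antitoneOn_of_succ_le Set.ordConnected_Iic fun _ _ _ hsucc =>
    gObj_succ_le v (by simp at hsucc; omega) (hpivot _ (by simp at hsucc; omega))

end Tails

theorem pivotal_threshold_error_bound_general {N m : ℕ} (v : Fin N → ℂ)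
    (qstar : ℕ) (hqs : qstar ≤ m)
    (hmin : ∀ q < qstar, ¬ (((m : ℝ) - q) * entryAbs v q < tailAbs v q)) :
    ∀ q < m, fObj v m qstar ≤ gObj v m q := by
  intro q hq
  rcases le_total q qstar with hle | hle
  · have hpivot : ∀ p < qstar, tailAbs v p ≤ (m - p) * entryAbs v p :=
      fun p hp => not_lt.mp (hmin p hp)
    calc fObj v m qstar ≤ gObj v m qstar := fObj_le_gObj v qstar
      _ ≤ gObj v m q :=
        antitoneOn_gObj v hqs hpivot (Set.mem_Iic.mpr hle) Set.self_mem_Iic hle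
  · calc fObj v m qstar ≤ fObj v m q :=
        monotoneOn_fObj v (hle.trans_lt hq) hq hle
      _ ≤ gObj v m q := fObj_le_gObj v q

theorem pivotal_threshold_error_bound {N m : ℕ} (v : Fin N → ℂ)
    (hsort : ∀ j k : Fin N, j ≤ k → ‖v k‖ ≤ ‖v j‖)
    (hm0 : 0 < m) (hmN : m ≤ N)
    (qstar : ℕ) (hqs : qstar ≤ m)
    (hcond : ((m : ℝ) - qstar) * entryAbs v qstar < tailAbs v qstar)
    (hmin : ∀ q < qstar, ¬ (((m : ℝ) - q) * entryAbs v q < tailAbs v q)) :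
    ∀ q < m, fObj v m qstar ≤ gObj v m q :=
  pivotal_threshold_error_bound_general v qstar hqs hmin
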